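/- arXiv:1712.01431 — 2 statements merged into one kernel-verified Lean document; each statement's English description precedes it below -/
import Mathlib

section
/- Let A and B be N×N nonnegative real matrices and θ ∈ (0,1). Then ρ(A^{(1-θ)} ⊙ B^{(θ)}) ≤ ρ(A)^{1-θ} ρ(B)^{θ}, where ⊙ is the Hadamard (entrywise) product, X^{(θ)} denotes the entrywise θ-th power of a nonnegative matrix X, and ρ denotes the spectral radius. -/
/-- The spectral radius of a real square matrix: the supremum of the moduli of its
complex eigenvalues (roots of its characteristic polynomial over `ℂ`). -/
noncomputable def specRad {N : ℕ} (A : Matrix (Fin N) (Fin N) ℝ) : ℝ :=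
  sSup {r : ℝ | ∃ μ : ℂ, ((A.map (algebraMap ℝ ℂ)).charpoly).IsRoot μ ∧ r = ‖μ‖}

/-!
By Hölder's inequality, the entries of `(A^{(1-θ)} ⊙ B^{(θ)})^k` are bounded by those of
`(A^k)^{(1-θ)} ⊙ (B^k)^{(θ)}`, and a second application of Hölder to the row sums bounds the
`ℓ∞` operator norm: `‖(A^{(1-θ)} ⊙ B^{(θ)})^k‖ ≤ ‖A^k‖^{1-θ} ‖B^k‖^θ`. Taking `k`-th roots and
letting `k → ∞`, Gelfand's formula turns this into the inequality for spectral radii.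
-/

open scoped ENNReal

theorem sum_rpow_one_sub_mul_rpow_le {ι : Type*} (s : Finset ι) {f g : ι → ℝ}
    (hf : ∀ i ∈ s, 0 ≤ f i) (hg : ∀ i ∈ s, 0 ≤ g i) {θ : ℝ} (h0 : 0 < θ) (h1 : θ < 1) :
    ∑ i ∈ s, f i ^ (1 - θ) * g i ^ θ ≤ (∑ i ∈ s, f i) ^ (1 - θ) * (∑ i ∈ s, g i) ^ θ := by
  have h1θ : 0 < 1 - θ := by linarith
  have hpq : Real.HolderConjugate (1 - θ)⁻¹ θ⁻¹ :=
    Real.holderConjugate_iff.mpr ⟨(one_lt_inv₀ h1θ).2 (by linarith), by simp⟩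
  have holder := Real.inner_le_Lp_mul_Lq_of_nonneg s hpq
    (fun i hi => Real.rpow_nonneg (hf i hi) (1 - θ)) (fun i hi => Real.rpow_nonneg (hg i hi) θ)
  rwa [Finset.sum_congr rfl fun i hi => Real.rpow_rpow_inv (hf i hi) h1θ.ne',
    Finset.sum_congr rfl fun i hi => Real.rpow_rpow_inv (hg i hi) h0.ne', one_div, inv_inv,
    one_div, inv_inv] at holder

namespace spectrum

variable {A : Type*} [NormedRing A] [NormedAlgebra ℂ A] [CompleteSpace A]

theorem spectralRadius_ne_top (a : A) : spectralRadius ℂ a ≠ ⊤ :=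
  ((spectralRadius_le_pow_nnnorm_pow_one_div ℂ a 0).trans_lt
    (ENNReal.mul_lt_top (by simp) (by simp))).ne

theorem spectralRadius_le_rpow_mul_rpow {a b c : A} {θ : ℝ} (h0 : 0 ≤ θ) (h1 : θ ≤ 1)
    (h : ∀ n : ℕ, ‖c ^ n‖₊ ≤ ‖a ^ n‖₊ ^ (1 - θ) * ‖b ^ n‖₊ ^ θ) :
    spectralRadius ℂ c ≤ spectralRadius ℂ a ^ (1 - θ) * spectralRadius ℂ b ^ θ := by
  have h1θ : 0 ≤ 1 - θ := by linarith
  have hlim := ENNReal.Tendsto.mul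
    (pow_nnnorm_pow_one_div_tendsto_nhds_spectralRadius a |>.ennrpow_const (1 - θ))
    (Or.inr (ENNReal.rpow_ne_top_of_nonneg h0 (spectralRadius_ne_top b)))
    (pow_nnnorm_pow_one_div_tendsto_nhds_spectralRadius b |>.ennrpow_const θ)
    (Or.inr (ENNReal.rpow_ne_top_of_nonneg h1θ (spectralRadius_ne_top a)))
  refine le_of_tendsto_of_tendsto' (pow_nnnorm_pow_one_div_tendsto_nhds_spectralRadius c) hlim
    fun n => ?_
  calc (‖c ^ n‖₊ : ℝ≥0∞) ^ (1 / n : ℝ)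
      ≤ ((‖a ^ n‖₊ : ℝ≥0∞) ^ (1 - θ) * (‖b ^ n‖₊ : ℝ≥0∞) ^ θ) ^ (1 / n : ℝ) := by
        gcongr
        rw [← ENNReal.coe_rpow_of_nonneg _ h1θ, ← ENNReal.coe_rpow_of_nonneg _ h0]
        exact_mod_cast h n
    _ = ((‖a ^ n‖₊ : ℝ≥0∞) ^ (1 / n : ℝ)) ^ (1 - θ) * ((‖b ^ n‖₊ : ℝ≥0∞) ^ (1 / n : ℝ)) ^ θ := by
        rw [ENNReal.mul_rpow_of_nonneg _ _ (by positivity), ← ENNReal.rpow_mul, ← ENNReal.rpow_mul,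
          ← ENNReal.rpow_mul, ← ENNReal.rpow_mul, mul_comm (1 - θ), mul_comm θ]

end spectrum

namespace Matrix

variable {l m n : Type*}

/-- `A^{(1-θ)} ⊙ B^{(θ)}` in the notation of the paper. -/
noncomputable def hadamardGeomMean (θ : ℝ) (A B : Matrix m n ℝ) : Matrix m n ℝ :=
  of fun i j => A i j ^ (1 - θ) * B i j ^ θ

@[simp]
theorem hadamardGeomMean_apply (θ : ℝ) (A B : Matrix m n ℝ) (i : m) (j : n) :
    hadamardGeomMean θ A B i j = A i j ^ (1 - θ) * B i j ^ θ := rfl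

theorem hadamardGeomMean_nonneg {θ : ℝ} {A B : Matrix m n ℝ} (hA : ∀ i j, 0 ≤ A i j)
    (hB : ∀ i j, 0 ≤ B i j) (i : m) (j : n) : 0 ≤ hadamardGeomMean θ A B i j :=
  mul_nonneg (Real.rpow_nonneg (hA i j) _) (Real.rpow_nonneg (hB i j) _)

theorem mul_apply_le_mul_apply_of_le [Fintype m] {A A' : Matrix l m ℝ} {B : Matrix m n ℝ}
    (hAA' : ∀ i j, A i j ≤ A' i j) (hB : ∀ i j, 0 ≤ B i j) (i : l) (j : n) :
    (A * B) i j ≤ (A' * B) i j :=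
  Finset.sum_le_sum fun k _ => mul_le_mul_of_nonneg_right (hAA' i k) (hB k j)

theorem hadamardGeomMean_mul_apply_le [Fintype m] {θ : ℝ} (h0 : 0 < θ) (h1 : θ < 1)
    {A B : Matrix l m ℝ} {C D : Matrix m n ℝ} (hA : ∀ i j, 0 ≤ A i j) (hB : ∀ i j, 0 ≤ B i j)
    (hC : ∀ i j, 0 ≤ C i j) (hD : ∀ i j, 0 ≤ D i j) (i : l) (j : n) :
    (hadamardGeomMean θ A B * hadamardGeomMean θ C D) i j ≤
      hadamardGeomMean θ (A * C) (B * D) i j := by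
  have hterm (k : m) : hadamardGeomMean θ A B i k * hadamardGeomMean θ C D k j =
      (A i k * C k j) ^ (1 - θ) * (B i k * D k j) ^ θ := by
    simp only [hadamardGeomMean_apply, Real.mul_rpow (hA i k) (hC k j),
      Real.mul_rpow (hB i k) (hD k j)]
    ring
  rw [mul_apply, Finset.sum_congr rfl fun k _ => hterm k, hadamardGeomMean_apply]
  exact sum_rpow_one_sub_mul_rpow_le _ (fun k _ => mul_nonneg (hA i k) (hC k j))
    (fun k _ => mul_nonneg (hB i k) (hD k j)) h0 h1

theorem hadamardGeomMean_pow_apply_le [Fintype n] [DecidableEq n] {θ : ℝ} (h0 : 0 < θ)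
    (h1 : θ < 1) {A B : Matrix n n ℝ} (hA : ∀ i j, 0 ≤ A i j) (hB : ∀ i j, 0 ≤ B i j)
    (k : ℕ) (i j : n) :
    (hadamardGeomMean θ A B ^ k) i j ≤ hadamardGeomMean θ (A ^ k) (B ^ k) i j := by
  induction k generalizing i j with
  | zero =>
    rw [pow_zero, pow_zero, pow_zero, hadamardGeomMean_apply, one_apply]
    split_ifs <;> simp [Real.zero_rpow h0.ne', Real.zero_rpow (sub_pos.2 h1).ne']
  | succ k ih =>
    rw [pow_succ, pow_succ A, pow_succ B]
    exact (mul_apply_le_mul_apply_of_le ih (hadamardGeomMean_nonneg hA hB) i j).trans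
      (hadamardGeomMean_mul_apply_le h0 h1 (pow_apply_nonneg hA k) (pow_apply_nonneg hB k)
        hA hB i j)

section LinftyOpNorm

attribute [local instance] Matrix.linftyOpNormedAddCommGroup

theorem sum_norm_apply_le_linfty_opNorm [Fintype m] [Fintype n] (A : Matrix m n ℝ) (i : m) :
    ∑ j, ‖A i j‖ ≤ ‖A‖ := by
  rw [linfty_opNorm_def]
  simpa using NNReal.coe_le_coe.2 (Finset.le_sup (f := fun i => ∑ j, ‖A i j‖₊) (Finset.mem_univ i))

theorem linfty_opNNNorm_le_of_abs_le_hadamardGeomMean [Fintype m] [Fintype n] {θ : ℝ}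
    (h0 : 0 < θ) (h1 : θ < 1) {X A B : Matrix m n ℝ} (hA : ∀ i j, 0 ≤ A i j)
    (hB : ∀ i j, 0 ≤ B i j) (hX : ∀ i j, |X i j| ≤ hadamardGeomMean θ A B i j) :
    ‖X‖₊ ≤ ‖A‖₊ ^ (1 - θ) * ‖B‖₊ ^ θ := by
  rw [linfty_opNNNorm_def]
  refine Finset.sup_le fun i _ => ?_
  rw [← NNReal.coe_le_coe]
  push_cast
  have row_le (M : Matrix m n ℝ) : ∑ j, M i j ≤ ‖M‖ :=
    (Finset.sum_le_sum fun j _ => Real.le_norm_self _).trans (sum_norm_apply_le_linfty_opNorm M i)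
  have hA_row := Finset.sum_nonneg fun j (_ : j ∈ Finset.univ) => hA i j
  have hB_row := Finset.sum_nonneg fun j (_ : j ∈ Finset.univ) => hB i j
  calc ∑ j, ‖X i j‖ ≤ ∑ j, A i j ^ (1 - θ) * B i j ^ θ := Finset.sum_le_sum fun j _ => hX i j
    _ ≤ (∑ j, A i j) ^ (1 - θ) * (∑ j, B i j) ^ θ :=
      sum_rpow_one_sub_mul_rpow_le _ (fun j _ => hA i j) (fun j _ => hB i j) h0 h1
    _ ≤ ‖A‖ ^ (1 - θ) * ‖B‖ ^ θ := by
      gcongr <;> linarith [row_le A, row_le B]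

theorem linfty_opNNNorm_map_ofReal [Fintype m] [Fintype n] (X : Matrix m n ℝ) :
    ‖X.map (algebraMap ℝ ℂ)‖₊ = ‖X‖₊ := by
  simp [linfty_opNNNorm_def, Complex.nnnorm_real]

theorem linfty_opNNNorm_hadamardGeomMean_pow_le [Fintype n] [DecidableEq n] {θ : ℝ}
    (h0 : 0 < θ) (h1 : θ < 1) {A B : Matrix n n ℝ} (hA : ∀ i j, 0 ≤ A i j)
    (hB : ∀ i j, 0 ≤ B i j) (k : ℕ) :
    ‖hadamardGeomMean θ A B ^ k‖₊ ≤ ‖A ^ k‖₊ ^ (1 - θ) * ‖B ^ k‖₊ ^ θ :=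
  linfty_opNNNorm_le_of_abs_le_hadamardGeomMean h0 h1 (pow_apply_nonneg hA k)
    (pow_apply_nonneg hB k) fun i j =>
      (abs_of_nonneg (pow_apply_nonneg (hadamardGeomMean_nonneg hA hB) k i j)).trans_le
        (hadamardGeomMean_pow_apply_le h0 h1 hA hB k i j)

end LinftyOpNorm

section SpectralRadius

attribute [local instance] Matrix.linftyOpNormedRing Matrix.linftyOpNormedAlgebra

theorem toReal_spectralRadius_hadamardGeomMean_le [Fintype n] [DecidableEq n] {θ : ℝ}
    (h0 : 0 < θ) (h1 : θ < 1) {A B : Matrix n n ℝ} (hA : ∀ i j, 0 ≤ A i j)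
    (hB : ∀ i j, 0 ≤ B i j) :
    (spectralRadius ℂ ((hadamardGeomMean θ A B).map (algebraMap ℝ ℂ))).toReal ≤
      (spectralRadius ℂ (A.map (algebraMap ℝ ℂ))).toReal ^ (1 - θ) *
        (spectralRadius ℂ (B.map (algebraMap ℝ ℂ))).toReal ^ θ := by
  have hle := spectrum.spectralRadius_le_rpow_mul_rpow (a := A.map (algebraMap ℝ ℂ))
      (b := B.map (algebraMap ℝ ℂ)) (c := (hadamardGeomMean θ A B).map (algebraMap ℝ ℂ))
      h0.le h1.le fun k => by
    simpa only [← Matrix.map_pow, linfty_opNNNorm_map_ofReal] using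
      linfty_opNNNorm_hadamardGeomMean_pow_le h0 h1 hA hB k
  rw [ENNReal.toReal_rpow, ENNReal.toReal_rpow, ← ENNReal.toReal_mul]
  exact ENNReal.toReal_mono (ENNReal.mul_ne_top
    (ENNReal.rpow_ne_top_of_nonneg (sub_pos.2 h1).le (spectrum.spectralRadius_ne_top _))
    (ENNReal.rpow_ne_top_of_nonneg h0.le (spectrum.spectralRadius_ne_top _))) hle

end SpectralRadius

end Matrix

section

attribute [local instance] Matrix.linftyOpNormedRing Matrix.linftyOpNormedAlgebra

theorem specRad_eq_toReal_spectralRadius {N : ℕ} (A : Matrix (Fin N) (Fin N) ℝ) :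
    specRad A = (spectralRadius ℂ (A.map (algebraMap ℝ ℂ))).toReal := by
  set M := A.map (algebraMap ℝ ℂ)
  have hσ : {r : ℝ | ∃ μ : ℂ, M.charpoly.IsRoot μ ∧ r = ‖μ‖} = (‖·‖) '' spectrum ℂ M := by
    ext r
    simp [Matrix.mem_spectrum_iff_isRoot_charpoly, eq_comm]
  rw [specRad, hσ]
  rcases (spectrum ℂ M).eq_empty_or_nonempty with h | h
  · simp [h, spectralRadius]
  obtain ⟨z, hz, hzr⟩ := spectrum.exists_nnnorm_eq_spectralRadius_of_nonempty h
  rw [← hzr]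
  refine IsGreatest.csSup_eq ⟨Set.mem_image_of_mem _ hz, ?_⟩
  rintro _ ⟨μ, hμ, rfl⟩
  have hμz : (‖μ‖₊ : ℝ≥0∞) ≤ ‖z‖₊ := hzr ▸ le_iSup₂ (f := fun μ _ => (‖μ‖₊ : ℝ≥0∞)) μ hμ
  exact_mod_cast hμz

end

/-- Elsner–Johnson–Dias da Silva: `ρ(A^{(1-θ)} ⊙ B^{(θ)}) ≤ ρ(A)^{1-θ} ρ(B)^θ` for
nonnegative square matrices `A`, `B` and `θ ∈ (0,1)`, where `⊙` is the Hadamard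
product and `X^{(θ)}` the entrywise power. -/
theorem stmt_8 {N : ℕ} (A B : Matrix (Fin N) (Fin N) ℝ)
    (hA : ∀ i j, 0 ≤ A i j) (hB : ∀ i j, 0 ≤ B i j)
    (θ : ℝ) (hθ : θ ∈ Set.Ioo (0 : ℝ) 1) :
    specRad (Matrix.of fun i j => A i j ^ (1 - θ) * B i j ^ θ) ≤
      specRad A ^ (1 - θ) * specRad B ^ θ := by
  obtain ⟨h0, h1⟩ := hθ
  rw [specRad_eq_toReal_spectralRadius, specRad_eq_toReal_spectralRadius,
    specRad_eq_toReal_spectralRadius]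
  exact Matrix.toReal_spectralRadius_hadamardGeomMean_le h0 h1 hA hB
end

section
/- Let v ∈ (0,1), μ > 0, and for τ ∈ (0,1) define the 2×2 matrix B(τ, s) = v·[[τ, (1-τ)e^{μs}], [(1-τ)e^{μs}, τ]]. Then ρ(B(τ,s)) = v(τ + (1-τ)e^{μs}), and the unique s > 0 solving ρ(B(τ,s)) = 1 is α(τ) = (1/μ) log(1 + (1/v - 1)/(1-τ)), which is strictly increasing in τ on (0,1). -/
open Polynomial in
theorem Matrix.charpoly_fin_two_symm {R : Type*} [CommRing R] (a b : R) :
    (!![a, b; b, a]).charpoly = (X - C (a + b)) * (X - C (a - b)) := by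
  simp only [Matrix.charpoly, Matrix.det_fin_two, Matrix.charmatrix_apply, Matrix.of_apply,
    Matrix.cons_val', Matrix.cons_val_zero, Matrix.cons_val_one, Matrix.empty_val',
    Matrix.cons_val_fin_one, Matrix.diagonal_apply, map_add, map_sub]
  norm_num
  ring

theorem Matrix.isRoot_charpoly_fin_two_symm_iff {R : Type*} [CommRing R] [IsDomain R]
    (a b z : R) : (!![a, b; b, a]).charpoly.IsRoot z ↔ z = a + b ∨ z = a - b := by
  simp [Matrix.charpoly_fin_two_symm, sub_eq_zero]

theorem max_abs_add_abs_sub (a b : ℝ) : max |a + b| |a - b| = |a| + |b| := by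
  grind [abs_of_nonneg, abs_of_nonpos]

theorem specRad_fin_two_symm (a b : ℝ) : specRad !![a, b; b, a] = |a| + |b| := by
  have hmap : (!![a, b; b, a]).map (algebraMap ℝ ℂ) = !![(a : ℂ), b; b, a] := by
    ext i j; fin_cases i <;> fin_cases j <;> rfl
  have hroots : {r : ℝ | ∃ z : ℂ, ((!![a, b; b, a]).map (algebraMap ℝ ℂ)).charpoly.IsRoot z ∧
      r = ‖z‖} = {|a + b|, |a - b|} := by
    ext r
    simp only [hmap, Matrix.isRoot_charpoly_fin_two_symm_iff, or_and_right, exists_or,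
      exists_eq_left, ← Complex.ofReal_add, ← Complex.ofReal_sub, Complex.norm_real,
      Real.norm_eq_abs, Set.mem_ofPred_eq, Set.mem_insert_iff, Set.mem_singleton_iff]
  rw [specRad, hroots, csSup_pair]
  exact max_abs_add_abs_sub a b

theorem specRad_smul_fin_two_symm (v a b : ℝ) :
    specRad (v • !![a, b; b, a]) = |v| * (|a| + |b|) := by
  have hsmul : v • !![a, b; b, a] = !![v * a, v * b; v * b, v * a] := by
    ext i j; fin_cases i <;> fin_cases j <;> rfl
  rw [hsmul, specRad_fin_two_symm, abs_mul, abs_mul, mul_add]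

theorem mul_add_one_sub_mul_eq_one_iff {v τ x : ℝ} (hv : v ≠ 0) (hτ : τ ≠ 1) :
    v * (τ + (1 - τ) * x) = 1 ↔ x = 1 + (1 / v - 1) / (1 - τ) := by
  have h1τ : 1 - τ ≠ 0 := sub_ne_zero.2 hτ.symm
  field_simp
  constructor <;> intro h <;> linarith

theorem one_lt_one_add_inv_sub_one_div {v τ : ℝ} (hv : v ∈ Set.Ioo 0 1) (hτ : τ < 1) :
    1 < 1 + (1 / v - 1) / (1 - τ) := by
  have hc : 0 < 1 / v - 1 := sub_pos.2 ((one_lt_div hv.1).2 hv.2)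
  linarith [div_pos hc (sub_pos.2 hτ)]

noncomputable def paretoExponent (v μ τ : ℝ) : ℝ :=
  (1 / μ) * Real.log (1 + (1 / v - 1) / (1 - τ))

section paretoExponent

variable {v μ τ : ℝ}

theorem paretoExponent_pos (hv : v ∈ Set.Ioo 0 1) (hμ : 0 < μ) (hτ : τ < 1) :
    0 < paretoExponent v μ τ :=
  mul_pos (one_div_pos.2 hμ) (Real.log_pos (one_lt_one_add_inv_sub_one_div hv hτ))

theorem exp_mul_paretoExponent (hv : v ∈ Set.Ioo 0 1) (hμ : μ ≠ 0) (hτ : τ < 1) :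
    Real.exp (μ * paretoExponent v μ τ) = 1 + (1 / v - 1) / (1 - τ) := by
  rw [paretoExponent, ← mul_assoc, mul_one_div_cancel hμ, one_mul,
    Real.exp_log (by linarith [one_lt_one_add_inv_sub_one_div hv hτ])]

theorem strictMonoOn_paretoExponent (hv : v ∈ Set.Ioo 0 1) (hμ : 0 < μ) :
    StrictMonoOn (paretoExponent v μ) (Set.Iio 1) := by
  intro τ₁ hτ₁ τ₂ hτ₂ hlt
  have hc : 0 < 1 / v - 1 := sub_pos.2 ((one_lt_div hv.1).2 hv.2)
  have hlog_arg : 1 < 1 + (1 / v - 1) / (1 - τ₁) := one_lt_one_add_inv_sub_one_div hv hτ₁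
  have hτ₂' : (0 : ℝ) < 1 - τ₂ := sub_pos.2 hτ₂
  unfold paretoExponent
  gcongr

end paretoExponent

/-- Counterexample to monotonicity in persistence: for
`B(τ,s) = v·[[τ, (1-τ)e^{μs}],[(1-τ)e^{μs}, τ]]` the spectral radius is
`v(τ + (1-τ)e^{μs})`, the unique positive root of `ρ(B(τ,s)) = 1` is
`α(τ) = (1/μ)log(1 + (1/v - 1)/(1-τ))`, and `α` is strictly increasing on `(0,1)`. -/
theorem stmt_13 (v μ : ℝ) (hv : v ∈ Set.Ioo (0 : ℝ) 1) (hμ : 0 < μ) :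
    (∀ τ ∈ Set.Ioo (0 : ℝ) 1, ∀ s : ℝ,
      specRad (v • !![τ, (1 - τ) * Real.exp (μ * s);
                      (1 - τ) * Real.exp (μ * s), τ]) =
        v * (τ + (1 - τ) * Real.exp (μ * s))) ∧
    (∀ τ ∈ Set.Ioo (0 : ℝ) 1,
      0 < (1 / μ) * Real.log (1 + (1 / v - 1) / (1 - τ)) ∧
      specRad (v • !![τ, (1 - τ) * Real.exp (μ * ((1 / μ) * Real.log (1 + (1 / v - 1) / (1 - τ))));
                      (1 - τ) * Real.exp (μ * ((1 / μ) * Real.log (1 + (1 / v - 1) / (1 - τ)))), τ]) = 1 ∧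
      (∀ s : ℝ, 0 < s →
        specRad (v • !![τ, (1 - τ) * Real.exp (μ * s);
                        (1 - τ) * Real.exp (μ * s), τ]) = 1 →
        s = (1 / μ) * Real.log (1 + (1 / v - 1) / (1 - τ)))) ∧
    StrictMonoOn (fun τ : ℝ => (1 / μ) * Real.log (1 + (1 / v - 1) / (1 - τ)))
      (Set.Ioo (0 : ℝ) 1) := by
  have hρ : ∀ τ ∈ Set.Ioo (0 : ℝ) 1, ∀ s : ℝ,
      specRad (v • !![τ, (1 - τ) * Real.exp (μ * s); (1 - τ) * Real.exp (μ * s), τ]) =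
        v * (τ + (1 - τ) * Real.exp (μ * s)) := by
    intro τ hτ s
    have hb : 0 < (1 - τ) * Real.exp (μ * s) := mul_pos (sub_pos.2 hτ.2) (Real.exp_pos _)
    rw [specRad_smul_fin_two_symm, abs_of_pos hv.1, abs_of_pos hτ.1, abs_of_pos hb]
  refine ⟨hρ, fun τ hτ => ⟨paretoExponent_pos hv hμ hτ.2, ?_, fun s _ hs => ?_⟩,
    (strictMonoOn_paretoExponent hv hμ).mono Set.Ioo_subset_Iio_self⟩
  · rw [hρ τ hτ, ← paretoExponent, exp_mul_paretoExponent hv hμ.ne' hτ.2]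
    exact (mul_add_one_sub_mul_eq_one_iff hv.1.ne' hτ.2.ne).2 rfl
  · rw [hρ τ hτ, mul_add_one_sub_mul_eq_one_iff hv.1.ne' hτ.2.ne,
      ← exp_mul_paretoExponent hv hμ.ne' hτ.2] at hs
    exact mul_left_cancel₀ hμ.ne' (Real.exp_injective hs)
end
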